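/- Coercivity of the discrete advection–diffusion form: if ε > 4‖β‖_∞ (with Poincaré constant C = 2), then b(u,u) ≥ (ε − 4‖β‖_∞) ‖u‖_{∇,h}² for all u ∈ D_{0,h}, where b(u,v) = (β_x ∇_{x+}u + β_y ∇_{y+}u, v)_h + ε (∇_+u, ∇_+v)_h. -/

import Mathlib

noncomputable section

/-- Boundary-zero grid functions on `{0,…,N}²`. -/
def BZ (N : ℕ) (u : ℕ → ℕ → ℝ) : Prop :=
  ∀ i j, i ≤ N → j ≤ N → (i = 0 ∨ i = N ∨ j = 0 ∨ j = N) → u i j = 0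

/-- `‖u‖_{∇,h}² = ‖∇_{x+}u‖_h² + ‖∇_{y+}u‖_h²`. -/
def gradNorm2 (N : ℕ) (h : ℝ) (u : ℕ → ℕ → ℝ) : ℝ :=
  h ^ 2 * ∑ i ∈ Finset.range N, ∑ j ∈ Finset.range (N + 1),
      ((u (i + 1) j - u i j) / h) ^ 2
  + h ^ 2 * ∑ i ∈ Finset.range (N + 1), ∑ j ∈ Finset.range N,
      ((u i (j + 1) - u i j) / h) ^ 2

/-- The discrete advection–diffusion bilinear form
`b(u,v) = (β_x ∇_{x+}u + β_y ∇_{y+}u, v)_h + ε (∇_+u, ∇_+v)_h`. -/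
def bform (N : ℕ) (h βx βy ε : ℝ) (u v : ℕ → ℕ → ℝ) : ℝ :=
  h ^ 2 * ∑ i ∈ Finset.range N, ∑ j ∈ Finset.range (N + 1),
      (βx * ((u (i + 1) j - u i j) / h)) * v i j
  + h ^ 2 * ∑ i ∈ Finset.range (N + 1), ∑ j ∈ Finset.range N,
      (βy * ((u i (j + 1) - u i j) / h)) * v i j
  + ε * (h ^ 2 * ∑ i ∈ Finset.range N, ∑ j ∈ Finset.range (N + 1),
            ((u (i + 1) j - u i j) / h) * ((v (i + 1) j - v i j) / h)
        + h ^ 2 * ∑ i ∈ Finset.range (N + 1), ∑ j ∈ Finset.range N,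
            ((u i (j + 1) - u i j) / h) * ((v i (j + 1) - v i j) / h))

/-! Summation by parts against a boundary-zero function gives `∑ (Δu) u = -½ ∑ (Δu)²`, so the
advection part of `b(u,u)` is exactly `-(h/2)(β_x ‖∇_{x+}u‖_h² + β_y ‖∇_{y+}u‖_h²)`. Since
`h ≤ 1` it is at least `-(‖β‖_∞/2) ‖u‖_{∇,h}²`, while the diffusion part is `ε ‖u‖_{∇,h}²`;
no Poincaré inequality is needed. -/

def gradXNorm2 (N : ℕ) (h : ℝ) (u : ℕ → ℕ → ℝ) : ℝ :=
  h ^ 2 * ∑ i ∈ Finset.range N, ∑ j ∈ Finset.range (N + 1), ((u (i + 1) j - u i j) / h) ^ 2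

def gradYNorm2 (N : ℕ) (h : ℝ) (u : ℕ → ℕ → ℝ) : ℝ :=
  h ^ 2 * ∑ i ∈ Finset.range (N + 1), ∑ j ∈ Finset.range N, ((u i (j + 1) - u i j) / h) ^ 2

theorem gradXNorm2_nonneg (N : ℕ) (h : ℝ) (u : ℕ → ℕ → ℝ) : 0 ≤ gradXNorm2 N h u := by
  unfold gradXNorm2; positivity

theorem gradYNorm2_nonneg (N : ℕ) (h : ℝ) (u : ℕ → ℕ → ℝ) : 0 ≤ gradYNorm2 N h u := by
  unfold gradYNorm2; positivity

theorem gradNorm2_eq_add (N : ℕ) (h : ℝ) (u : ℕ → ℕ → ℝ) :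
    gradNorm2 N h u = gradXNorm2 N h u + gradYNorm2 N h u := rfl

theorem sum_range_sub_mul_self_eq_of_eq_zero (N : ℕ) (f : ℕ → ℝ) (h0 : f 0 = 0)
    (hN : f N = 0) :
    ∑ i ∈ Finset.range N, (f (i + 1) - f i) * f i
      = -(1 / 2) * ∑ i ∈ Finset.range N, (f (i + 1) - f i) ^ 2 := by
  have telescope : ∑ i ∈ Finset.range N, (f (i + 1) ^ 2 - f i ^ 2) = f N ^ 2 - f 0 ^ 2 :=
    Finset.sum_range_sub (fun i => f i ^ 2) N
  have split : ∀ i ∈ Finset.range N,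
      (f (i + 1) - f i) * f i = (f (i + 1) ^ 2 - f i ^ 2) / 2 - (f (i + 1) - f i) ^ 2 / 2 :=
    fun i _ => by ring
  rw [Finset.sum_congr rfl split, Finset.sum_sub_distrib, ← Finset.sum_div, telescope, h0, hN,
    ← Finset.sum_div]
  ring

/-- This also holds for `h = 0`, where both sides vanish because `x / 0 = 0`. -/
theorem sum_range_advection_eq_of_eq_zero (N : ℕ) (h β : ℝ) (f : ℕ → ℝ) (h0 : f 0 = 0)
    (hN : f N = 0) :
    ∑ i ∈ Finset.range N, (β * ((f (i + 1) - f i) / h)) * f i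
      = -(h * β / 2) * ∑ i ∈ Finset.range N, ((f (i + 1) - f i) / h) ^ 2 := by
  rcases eq_or_ne h 0 with rfl | hh
  · simp
  have rescale : ∑ i ∈ Finset.range N, (β * ((f (i + 1) - f i) / h)) * f i
      = β / h * ∑ i ∈ Finset.range N, (f (i + 1) - f i) * f i := by
    rw [Finset.mul_sum]
    exact Finset.sum_congr rfl fun i _ => by ring
  simp only [rescale, sum_range_sub_mul_self_eq_of_eq_zero N f h0 hN, div_pow, ← Finset.sum_div]
  field_simp

section BoundaryZero

variable {N : ℕ} {u : ℕ → ℕ → ℝ}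

theorem BZ.advectionX_eq (hu : BZ N u) (h β : ℝ) :
    h ^ 2 * ∑ i ∈ Finset.range N, ∑ j ∈ Finset.range (N + 1),
        (β * ((u (i + 1) j - u i j) / h)) * u i j
      = -(h * β / 2) * gradXNorm2 N h u := by
  have columnwise : ∀ j ∈ Finset.range (N + 1),
      ∑ i ∈ Finset.range N, (β * ((u (i + 1) j - u i j) / h)) * u i j
        = -(h * β / 2) * ∑ i ∈ Finset.range N, ((u (i + 1) j - u i j) / h) ^ 2 := by
    intro j hj
    have hjN : j ≤ N := Finset.mem_range_succ_iff.mp hj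
    exact sum_range_advection_eq_of_eq_zero N h β (fun i => u i j)
      (hu 0 j N.zero_le hjN (Or.inl rfl)) (hu N j le_rfl hjN (Or.inr (Or.inl rfl)))
  rw [gradXNorm2, Finset.sum_comm, Finset.sum_congr rfl columnwise, ← Finset.mul_sum,
    Finset.sum_comm]
  ring

theorem BZ.advectionY_eq (hu : BZ N u) (h β : ℝ) :
    h ^ 2 * ∑ i ∈ Finset.range (N + 1), ∑ j ∈ Finset.range N,
        (β * ((u i (j + 1) - u i j) / h)) * u i j
      = -(h * β / 2) * gradYNorm2 N h u := by
  have rowwise : ∀ i ∈ Finset.range (N + 1),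
      ∑ j ∈ Finset.range N, (β * ((u i (j + 1) - u i j) / h)) * u i j
        = -(h * β / 2) * ∑ j ∈ Finset.range N, ((u i (j + 1) - u i j) / h) ^ 2 := by
    intro i hi
    have hiN : i ≤ N := Finset.mem_range_succ_iff.mp hi
    exact sum_range_advection_eq_of_eq_zero N h β (u i)
      (hu i 0 hiN N.zero_le (Or.inr (Or.inr (Or.inl rfl))))
      (hu i N hiN le_rfl (Or.inr (Or.inr (Or.inr rfl))))
  rw [gradYNorm2, Finset.sum_congr rfl rowwise, ← Finset.mul_sum]
  ring

theorem BZ.bform_self_eq (hu : BZ N u) (h βx βy ε : ℝ) :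
    bform N h βx βy ε u u
      = -(h * βx / 2) * gradXNorm2 N h u + -(h * βy / 2) * gradYNorm2 N h u
        + ε * gradNorm2 N h u := by
  rw [bform, hu.advectionX_eq, hu.advectionY_eq, gradNorm2]
  simp only [← sq]

end BoundaryZero

theorem bform_coercive_general
    (N : ℕ) (h : ℝ) (hh : h = 1 / N)
    (βx βy ε : ℝ)
    (u : ℕ → ℕ → ℝ) (hu : BZ N u) :
    (ε - 4 * max |βx| |βy|) * gradNorm2 N h u ≤ bform N h βx βy ε u u := by
  have h_nonneg : 0 ≤ h := by rw [hh]; positivity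
  have h_le_one : h ≤ 1 := by rw [hh, one_div]; exact Nat.cast_inv_le_one N
  have advection_le : ∀ β, |β| ≤ max |βx| |βy| → h * β / 2 ≤ 4 * max |βx| |βy| := by
    intro β hβ
    nlinarith [le_abs_self β, abs_nonneg β, mul_le_mul_of_nonneg_left (le_abs_self β) h_nonneg]
  have hX := mul_le_mul_of_nonneg_right (advection_le βx (le_max_left _ _))
    (gradXNorm2_nonneg N h u)
  have hY := mul_le_mul_of_nonneg_right (advection_le βy (le_max_right _ _))
    (gradYNorm2_nonneg N h u)
  rw [hu.bform_self_eq, gradNorm2_eq_add]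
  linarith

/-- Coercivity of the discrete advection–diffusion form: if `ε > 4‖β‖_∞`
(Poincaré constant `C = 2`), then `b(u,u) ≥ (ε − 4‖β‖_∞) ‖u‖_{∇,h}²`. -/
theorem bform_coercive
    (N : ℕ) (hN : 0 < N) (h : ℝ) (hh : h = 1 / N)
    (βx βy ε : ℝ) (hε : 4 * max |βx| |βy| < ε)
    (u : ℕ → ℕ → ℝ) (hu : BZ N u) :
    (ε - 4 * max |βx| |βy|) * gradNorm2 N h u ≤ bform N h βx βy ε u u :=
  bform_coercive_general N h hh βx βy ε u hu
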